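/- Define G: Ξ → Θ by G(ξ)((s,a),(s',a')) = (Σ_{s̃} ξ(s',a',s̃) / Σ_{s̃,ã} ξ(s',ã,s̃))·ξ(s,a,s') when Σ_{s̃} ξ(s',a',s̃) > 0, and G(ξ)((s,a),(s',a')) = 0 otherwise. Then G is well-defined (i.e. G(ξ) ∈ Θ for every ξ ∈ Ξ), and D_mc(G(ξ')‖G(ξ)) = D_mdp(ξ'‖ξ) for all ξ' ∈ Ξ and ξ ∈ Ξ0. -/

import Mathlib

/-! With `μ(s,a) = Σ_{s'} ξ(s,a,s')`, `π(a|s) = μ(s,a)/Σ_a μ(s,a)` and `Q(s'|s,a) = ξ(s,a,s')/μ(s,a)`,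
the doublet `G(ξ)(x,y) = μ(x) π(y₂|y₁) Q(y₁|x)` is the stationary pair law of the state-action
chain driven by `Q` and `π`. Summing out the next action gives back `ξ`, so the rows of `G(ξ)`
sum to `μ`; balance of `ξ` makes the columns sum to `μ` too, hence `G(ξ) ∈ Θ`.

Both conditionals factor as a policy times a kernel: `G(ξ)(x,y)/μ(x) = π(y₂|y₁) Q(y₁|x)` and
`ξ(s,a,s')/μ_S(s) = π(a|s) Q(s'|s,a)`. So on the support both relative entropies equal
`Σ μ' log(π'/π) + Σ ξ' log(Q'/Q)`, the first sum reached through the column sums of `G(ξ')`.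
For `ξ ∈ Ξ₀` strong connectivity makes `μ` and `π` positive, so `G(ξ)` vanishes exactly where
`ξ` does and both sides are `⊤` in the same case.
-/

open Filter Topology MeasureTheory
open scoped Classical

namespace OfflineRL

variable (S A : Type*) [Fintype S] [Fintype A] [DecidableEq S] [DecidableEq A]

/-- Stationary policies `Π`. -/
def policySet : Set (S → A → ℝ) :=
  {π | ∀ s, (∀ a, 0 ≤ π s a) ∧ ∑ a, π s a = 1}

/-- Exploratory (everywhere positive) policies `Π₀`. -/
def policyPos : Set (S → A → ℝ) :=
  {π | π ∈ policySet S A ∧ ∀ s a, 0 < π s a}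

/-- Policies `Π_ε`. -/
def policyEps (ε : ℝ) : Set (S → A → ℝ) :=
  {π | π ∈ policySet S A ∧ ∀ s a, ε ≤ π s a}

/-- Transition kernels `𝒬`. -/
def kernelSet : Set (S → A → S → ℝ) :=
  {Q | ∀ s a, (∀ s', 0 ≤ Q s a s') ∧ ∑ s', Q s a s' = 1}

/-- Kernels whose associated directed graph on `S × A` is strongly connected, `𝒬₀`. -/
def kernel0 : Set (S → A → S → ℝ) :=
  {Q | Q ∈ kernelSet S A ∧
    ∀ x y : S × A, Relation.ReflTransGen (fun u v : S × A => 0 < Q u.1 u.2 v.1) x y}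

/-- Probability simplex over the states. -/
def stateSimplex : Set (S → ℝ) := {p | (∀ s, 0 ≤ p s) ∧ ∑ s, p s = 1}

/-- `Ξ`: state-action-next-state distributions with balanced marginals. -/
def XiSet : Set (S × A × S → ℝ) :=
  {ξ | (∀ z, 0 ≤ ξ z) ∧ (∑ z, ξ z = 1) ∧
    ∀ s : S, (∑ s' : S, ∑ a : A, ξ (s, a, s')) = ∑ s' : S, ∑ a : A, ξ (s', a, s)}

/-- `Ξ₀`: elements of `Ξ` with strongly connected support graph. -/
def Xi0Set : Set (S × A × S → ℝ) :=
  {ξ | ξ ∈ XiSet S A ∧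
    ∀ x y : S × A, Relation.ReflTransGen (fun u v : S × A => 0 < ξ (u.1, u.2, v.1)) x y}

/-- Stationary state-action distribution `μ(s,a) = Σ_{s'} ξ(s,a,s')`. -/
noncomputable def muXi (ξ : S × A × S → ℝ) (x : S × A) : ℝ := ∑ s', ξ (x.1, x.2, s')

/-- Transition kernel `Q(s'|s,a)` determined by `ξ`. -/
noncomputable def QXi (ξ : S × A × S → ℝ) (s : S) (a : A) (s' : S) : ℝ :=
  ξ (s, a, s') / muXi S A ξ (s, a)

/-- Behavioral policy `π(a'|s')` determined by `ξ`. -/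
noncomputable def piXi (ξ : S × A × S → ℝ) (s' : S) (a' : A) : ℝ :=
  muXi S A ξ (s', a') / ∑ a, muXi S A ξ (s', a)

/-- Transition matrix of the state-action chain of `ξ`. -/
noncomputable def Pmat (ξ : S × A × S → ℝ) (x x' : S × A) : ℝ :=
  piXi S A ξ x'.1 x'.2 * QXi S A ξ x.1 x.2 x'.1

/-- Probability of a finite state-action trajectory under `ℙ_ξ` with initial distribution `η`. -/
noncomputable def trajP (ξ : S × A × S → ℝ) (η : S → ℝ) (T : ℕ) (xs : Fin T → S × A) : ℝ :=
  ∏ t : Fin T,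
    if (t : ℕ) = 0 then η (xs t).1 * piXi S A ξ (xs t).1 (xs t).2
    else Pmat S A ξ (xs ⟨(t : ℕ) - 1, Nat.lt_of_le_of_lt (Nat.sub_le _ _) t.isLt⟩) (xs t)

/-- Empirical state-action-next-state distribution (with the ghost transition from
`(S_T, A_T)` to `S_1`, which makes it cyclic). -/
noncomputable def empXi (T : ℕ) (xs : Fin T → S × A) : S × A × S → ℝ := fun z =>
  ((Finset.univ.filter fun t : Fin T =>
      xs t = (z.1, z.2.1) ∧
      (xs ⟨((t : ℕ) + 1) % T,
        Nat.mod_lt _ (Nat.lt_of_le_of_lt (Nat.zero_le _) t.isLt)⟩).1 = z.2.2).card : ℝ) / T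

/-- `ℙ_ξ(ξ̂_T ∈ 𝒟)`. -/
noncomputable def probXi (ξ : S × A × S → ℝ) (η : S → ℝ) (𝒟 : Set (S × A × S → ℝ))
    (T : ℕ) : ℝ :=
  ∑ xs : Fin T → S × A, 𝒟.indicator (fun _ => trajP S A ξ η T xs) (empXi S A T xs)

/-- Extended-real logarithm: `elog x = log x` for `x > 0` and `⊥` otherwise. -/
noncomputable def elog (x : ℝ) : EReal := if x ≤ 0 then ⊥ else ((Real.log x : ℝ) : EReal)

/-- Marginal state distribution `μ_S(s)`. -/
noncomputable def rowXi (ξ : S × A × S → ℝ) (s : S) : ℝ := ∑ a, ∑ s', ξ (s, a, s')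

/-- Conditional relative entropy for MDPs, with the conventions `0·log(0/t) = 0` and
`t·log(t/0) = ∞` for `t > 0`. -/
noncomputable def Dmdp (ξ' ξ : S × A × S → ℝ) : EReal :=
  ∑ z : S × A × S,
    if ξ' z = 0 then (0 : EReal)
    else if ξ z = 0 then (⊤ : EReal)
    else (((ξ' z * (Real.log (ξ' z / rowXi S A ξ' z.1) -
      Real.log (ξ z / rowXi S A ξ z.1))) : ℝ) : EReal)

/-- Long-run average reward. -/
def V (r : S → A → ℝ) (ξ : S × A × S → ℝ) : ℝ := ∑ z : S × A × S, r z.1 z.2.1 * ξ z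

/-- `ξ` is the stationary state-action-next-state distribution induced by the pair
`(π, Q)` where `Q` is the kernel determined by `ξ0`. -/
def IsShift (π : S → A → ℝ) (ξ0 ξ : S × A × S → ℝ) : Prop :=
  ∃ μ : S × A → ℝ, (∀ x, 0 ≤ μ x) ∧ (∑ x, μ x = 1) ∧
    (∀ x' : S × A, μ x' = ∑ x : S × A, μ x * (π x'.1 x'.2 * QXi S A ξ0 x.1 x.2 x'.1)) ∧
    (∀ s a s', ξ (s, a, s') = QXi S A ξ0 s a s' * μ (s, a))

/-- The distributionally robust value function `V^π_ρ(ξ')`, where `f = f_π` is the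
distribution shift function of the evaluation policy. -/
noncomputable def Vrho (r : S → A → ℝ) (f : (S × A × S → ℝ) → (S × A × S → ℝ)) (ρ : ℝ)
    (ξ' : S × A × S → ℝ) : ℝ :=
  sInf ((fun ξ0 => V S A r (f ξ0)) '' {ξ0 | ξ0 ∈ Xi0Set S A ∧ Dmdp S A ξ' ξ0 ≤ (ρ : EReal)})


/-- `Θ`: doublet distributions on `𝒳 × 𝒳` (with `𝒳 = S × A`) with balanced marginals. -/
def ThetaSet : Set ((S × A) × (S × A) → ℝ) :=
  {p | (∀ z, 0 ≤ p z) ∧ (∑ z, p z = 1) ∧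
    ∀ y : S × A, ∑ x : S × A, p (x, y) = ∑ x : S × A, p (y, x)}

/-- Conditional relative entropy for Markov chains on `𝒳 = S × A`, with the
conventions `0·log(0/t) = 0` and `t·log(t/0) = ∞` for `t > 0`. -/
noncomputable def Dmc (θ' θ : (S × A) × (S × A) → ℝ) : EReal :=
  ∑ z : (S × A) × (S × A),
    if θ' z = 0 then (0 : EReal)
    else if θ z = 0 then (⊤ : EReal)
    else (((θ' z * (Real.log (θ' z / ∑ w, θ' (z.1, w)) -
      Real.log (θ z / ∑ w, θ (z.1, w)))) : ℝ) : EReal)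

/-- The map `G : Ξ → Θ` of Proposition 2. -/
noncomputable def GXi (ξ : S × A × S → ℝ) : (S × A) × (S × A) → ℝ := fun z =>
  if 0 < ∑ st : S, ξ (z.2.1, z.2.2, st)
  then ((∑ st : S, ξ (z.2.1, z.2.2, st)) / (∑ at' : A, ∑ st : S, ξ (z.2.1, at', st)))
        * ξ (z.1.1, z.1.2, z.2.1)
  else 0

end OfflineRL

theorem EReal.coe_finset_sum {ι : Type*} (s : Finset ι) (f : ι → ℝ) :
    ((∑ i ∈ s, f i : ℝ) : EReal) = ∑ i ∈ s, (f i : EReal) :=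
  map_sum (⟨⟨Real.toEReal, EReal.coe_zero⟩, EReal.coe_add⟩ : ℝ →+ EReal) f s

theorem EReal.finset_sum_ne_bot {ι : Type*} {s : Finset ι} {f : ι → EReal}
    (h : ∀ i ∈ s, f i ≠ ⊥) : ∑ i ∈ s, f i ≠ ⊥ :=
  Finset.sum_induction f (· ≠ ⊥) (fun _ _ ha hb => EReal.add_ne_bot_iff.2 ⟨ha, hb⟩)
    EReal.zero_ne_bot h

namespace OfflineRL

section RelativeEntropySum

variable {ι : Type*} [Fintype ι] (p q g : ι → ℝ)

theorem sum_ite_zero_top_eq_coe (h : ∀ i, p i ≠ 0 → q i ≠ 0) :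
    ∑ i, (if p i = 0 then (0 : EReal) else if q i = 0 then ⊤ else ((p i * g i : ℝ) : EReal)) =
      ((∑ i, p i * g i : ℝ) : EReal) := by
  rw [EReal.coe_finset_sum]
  refine Finset.sum_congr rfl fun i _ => ?_
  by_cases hp : p i = 0
  · simp [hp]
  · rw [if_neg hp, if_neg (h i hp)]

theorem sum_ite_zero_top_eq_top {i : ι} (hp : p i ≠ 0) (hq : q i = 0) :
    ∑ i, (if p i = 0 then (0 : EReal) else if q i = 0 then ⊤ else ((p i * g i : ℝ) : EReal)) =
      ⊤ := by
  classical
  rw [← Finset.add_sum_erase _ _ (Finset.mem_univ i), if_neg hp, if_pos hq]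
  refine EReal.top_add_of_ne_bot (EReal.finset_sum_ne_bot fun j _ => ?_)
  split_ifs
  exacts [EReal.zero_ne_bot, top_ne_bot, EReal.coe_ne_bot _]

end RelativeEntropySum

theorem log_div_sub_log_div_eq {w m' a' b' v m a b : ℝ} (hw : w = m' * (a' * b'))
    (hv : v = m * (a * b)) (hw0 : w ≠ 0) (hm : m ≠ 0) (ha : a ≠ 0) (hb : b ≠ 0) :
    Real.log (w / m') - Real.log (v / m) =
      (Real.log a' - Real.log a) + (Real.log b' - Real.log b) := by
  subst hw hv
  obtain ⟨hm', ha', hb'⟩ : m' ≠ 0 ∧ a' ≠ 0 ∧ b' ≠ 0 := by simpa [not_or] using hw0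
  rw [mul_div_cancel_left₀ _ hm', mul_div_cancel_left₀ _ hm, Real.log_mul ha' hb',
    Real.log_mul ha hb]
  ring

section Xi

variable {S A : Type*} [Fintype S] {ξ : S × A × S → ℝ}

theorem muXi_nonneg (h0 : ∀ z, 0 ≤ ξ z) (x : S × A) : 0 ≤ muXi S A ξ x :=
  Finset.sum_nonneg fun _ _ => h0 _

theorem le_muXi (h0 : ∀ z, 0 ≤ ξ z) (s : S) (a : A) (s' : S) :
    ξ (s, a, s') ≤ muXi S A ξ (s, a) :=
  Finset.single_le_sum (f := fun t => ξ (s, a, t)) (fun _ _ => h0 _) (Finset.mem_univ s')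

theorem muXi_mul_QXi (h0 : ∀ z, 0 ≤ ξ z) (s : S) (a : A) (s' : S) :
    muXi S A ξ (s, a) * QXi S A ξ s a s' = ξ (s, a, s') := by
  rcases (muXi_nonneg h0 (s, a)).eq_or_lt with hμ | hμ
  · rw [← hμ, zero_mul]
    exact (le_antisymm (hμ ▸ le_muXi h0 s a s') (h0 _)).symm
  · exact mul_div_cancel₀ _ hμ.ne'

variable [Fintype A]

theorem rowXi_nonneg (h0 : ∀ z, 0 ≤ ξ z) (s : S) : 0 ≤ rowXi S A ξ s :=
  Finset.sum_nonneg fun a _ => muXi_nonneg h0 (s, a)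

theorem muXi_le_rowXi (h0 : ∀ z, 0 ≤ ξ z) (s : S) (a : A) :
    muXi S A ξ (s, a) ≤ rowXi S A ξ s :=
  Finset.single_le_sum (f := fun b => muXi S A ξ (s, b)) (fun _ _ => muXi_nonneg h0 _)
    (Finset.mem_univ a)

theorem sum_fst_eq_rowXi (hξ : ξ ∈ XiSet S A) (s' : S) :
    ∑ x : S × A, ξ (x.1, x.2, s') = rowXi S A ξ s' := by
  rw [Fintype.sum_prod_type, ← hξ.2.2 s', rowXi, Finset.sum_comm]

theorem le_rowXi_snd (hξ : ξ ∈ XiSet S A) (x : S × A) (s' : S) :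
    ξ (x.1, x.2, s') ≤ rowXi S A ξ s' :=
  sum_fst_eq_rowXi hξ s' ▸
    Finset.single_le_sum (f := fun x : S × A => ξ (x.1, x.2, s')) (fun _ _ => hξ.1 _)
      (Finset.mem_univ x)

theorem rowXi_mul_piXi (h0 : ∀ z, 0 ≤ ξ z) (s : S) (a : A) :
    rowXi S A ξ s * piXi S A ξ s a = muXi S A ξ (s, a) := by
  rcases (rowXi_nonneg h0 s).eq_or_lt with hρ | hρ
  · rw [← hρ, zero_mul]
    exact (le_antisymm (hρ ▸ muXi_le_rowXi h0 s a) (muXi_nonneg h0 _)).symm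
  · exact mul_div_cancel₀ _ hρ.ne'

theorem eq_rowXi_mul_piXi_mul_QXi (h0 : ∀ z, 0 ≤ ξ z) (z : S × A × S) :
    ξ z = rowXi S A ξ z.1 * (piXi S A ξ z.1 z.2.1 * QXi S A ξ z.1 z.2.1 z.2.2) := by
  rw [← mul_assoc, rowXi_mul_piXi h0, muXi_mul_QXi h0]

theorem exists_pos_of_mem_XiSet (hξ : ξ ∈ XiSet S A) : ∃ z, 0 < ξ z := by
  obtain ⟨z, -, hz⟩ := Finset.exists_ne_zero_of_sum_ne_zero (hξ.2.1.trans_ne one_ne_zero)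
  exact ⟨z, (hξ.1 z).lt_of_ne' hz⟩

theorem muXi_pos (hξ : ξ ∈ Xi0Set S A) (x : S × A) : 0 < muXi S A ξ x := by
  obtain ⟨z, hz⟩ := exists_pos_of_mem_XiSet hξ.1
  rcases (hξ.2 x (z.1, z.2.1)).cases_head with rfl | ⟨y, hxy, -⟩
  · exact hz.trans_le (le_muXi hξ.1.1 _ _ _)
  · exact hxy.trans_le (le_muXi hξ.1.1 _ _ _)

theorem rowXi_pos (hξ : ξ ∈ Xi0Set S A) (s : S) : 0 < rowXi S A ξ s := by
  obtain ⟨z, -⟩ := exists_pos_of_mem_XiSet hξ.1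
  exact (muXi_pos hξ (s, z.2.1)).trans_le (muXi_le_rowXi hξ.1.1 _ _)

theorem piXi_pos (hξ : ξ ∈ Xi0Set S A) (s : S) (a : A) : 0 < piXi S A ξ s a :=
  div_pos (muXi_pos hξ (s, a)) (rowXi_pos hξ s)

theorem QXi_ne_zero (hξ : ξ ∈ Xi0Set S A) {s : S} {a : A} {s' : S} (h : ξ (s, a, s') ≠ 0) :
    QXi S A ξ s a s' ≠ 0 :=
  div_ne_zero h (muXi_pos hξ (s, a)).ne'

theorem sum_piXi {s : S} (hρ : rowXi S A ξ s ≠ 0) : ∑ a, piXi S A ξ s a = 1 := by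
  simp only [piXi, ← Finset.sum_div]
  exact div_self hρ

theorem sum_muXi : ∑ x, muXi S A ξ x = ∑ z, ξ z := by
  simp only [Fintype.sum_prod_type, muXi]

theorem sum_mul_muXi (f : S × A → ℝ) :
    ∑ z, ξ z * f (z.1, z.2.1) = ∑ x, muXi S A ξ x * f x := by
  simp only [Fintype.sum_prod_type, muXi, Finset.sum_mul]

end Xi

section G

variable {S A : Type*} [Fintype S] [Fintype A] {ξ : S × A × S → ℝ}

theorem GXi_eq_zero_of_eq_zero {x y : S × A} (h : ξ (x.1, x.2, y.1) = 0) :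
    GXi S A ξ (x, y) = 0 := by
  simp only [GXi, h, mul_zero, ite_self]

theorem GXi_eq_piXi_mul (h0 : ∀ z, 0 ≤ ξ z) (x y : S × A) :
    GXi S A ξ (x, y) = piXi S A ξ y.1 y.2 * ξ (x.1, x.2, y.1) := by
  change (if 0 < muXi S A ξ y then muXi S A ξ y / rowXi S A ξ y.1 * ξ (x.1, x.2, y.1) else 0) = _
  rcases (muXi_nonneg h0 y).eq_or_lt with hμ | hμ
  · rw [if_neg hμ.not_lt, piXi, ← hμ, zero_div, zero_mul]
  · rw [if_pos hμ]
    rfl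

theorem GXi_eq_muXi_mul (h0 : ∀ z, 0 ≤ ξ z) (x y : S × A) :
    GXi S A ξ (x, y) = muXi S A ξ x * (piXi S A ξ y.1 y.2 * QXi S A ξ x.1 x.2 y.1) := by
  rw [GXi_eq_piXi_mul h0, ← muXi_mul_QXi h0]
  ring

theorem GXi_nonneg (h0 : ∀ z, 0 ≤ ξ z) (z : (S × A) × (S × A)) : 0 ≤ GXi S A ξ z := by
  rw [GXi_eq_piXi_mul h0]
  exact mul_nonneg (div_nonneg (muXi_nonneg h0 _) (rowXi_nonneg h0 _)) (h0 _)

theorem GXi_ne_zero (hξ : ξ ∈ Xi0Set S A) {x y : S × A} (h : ξ (x.1, x.2, y.1) ≠ 0) :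
    GXi S A ξ (x, y) ≠ 0 :=
  GXi_eq_piXi_mul hξ.1.1 x y ▸ mul_ne_zero (piXi_pos hξ _ _).ne' h

theorem sum_GXi_fiber (hξ : ξ ∈ XiSet S A) (x : S × A) (s' : S) :
    ∑ a', GXi S A ξ (x, (s', a')) = ξ (x.1, x.2, s') := by
  simp only [GXi_eq_piXi_mul hξ.1, ← Finset.sum_mul]
  rcases (rowXi_nonneg hξ.1 s').eq_or_lt with hρ | hρ
  · rw [le_antisymm (hρ ▸ le_rowXi_snd hξ x s') (hξ.1 _), mul_zero]
  · rw [sum_piXi hρ.ne', one_mul]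

theorem sum_GXi_row (hξ : ξ ∈ XiSet S A) (x : S × A) :
    ∑ w, GXi S A ξ (x, w) = muXi S A ξ x := by
  rw [Fintype.sum_prod_type]
  exact Finset.sum_congr rfl fun s' _ => sum_GXi_fiber hξ x s'

theorem sum_GXi_col (hξ : ξ ∈ XiSet S A) (y : S × A) :
    ∑ x, GXi S A ξ (x, y) = muXi S A ξ y := by
  simp only [GXi_eq_piXi_mul hξ.1]
  rw [← Finset.mul_sum, sum_fst_eq_rowXi hξ, mul_comm, rowXi_mul_piXi hξ.1]

theorem GXi_mem_ThetaSet (hξ : ξ ∈ XiSet S A) : GXi S A ξ ∈ ThetaSet S A := by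
  refine ⟨GXi_nonneg hξ.1, ?_, fun y => by rw [sum_GXi_col hξ, sum_GXi_row hξ]⟩
  rw [Fintype.sum_prod_type]
  simp only [sum_GXi_row hξ, sum_muXi, hξ.2.1]

theorem sum_GXi_mul_snd (hξ : ξ ∈ XiSet S A) (f : S × A → ℝ) :
    ∑ z, GXi S A ξ z * f z.2 = ∑ y, muXi S A ξ y * f y := by
  rw [Fintype.sum_prod_type, Finset.sum_comm]
  simp only [← Finset.sum_mul, sum_GXi_col hξ]

theorem sum_GXi_mul_fst (hξ : ξ ∈ XiSet S A) (g : S × A × S → ℝ) :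
    ∑ z, GXi S A ξ z * g (z.1.1, z.1.2, z.2.1) = ∑ z, ξ z * g z := by
  simp only [Fintype.sum_prod_type, ← Finset.sum_mul, sum_GXi_fiber hξ]

end G

section LogRatio

variable {S A : Type*} [Fintype S] [Fintype A] {ξ' ξ : S × A × S → ℝ}

noncomputable def policyLogRatio (ξ' ξ : S × A × S → ℝ) (y : S × A) : ℝ :=
  Real.log (piXi S A ξ' y.1 y.2) - Real.log (piXi S A ξ y.1 y.2)

noncomputable def kernelLogRatio (ξ' ξ : S × A × S → ℝ) (z : S × A × S) : ℝ :=
  Real.log (QXi S A ξ' z.1 z.2.1 z.2.2) - Real.log (QXi S A ξ z.1 z.2.1 z.2.2)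

theorem GXi_mul_log_div_sub_log_div (hξ' : ∀ z, 0 ≤ ξ' z) (hξ : ξ ∈ Xi0Set S A)
    (hsupp : ∀ z, ξ' z ≠ 0 → ξ z ≠ 0) (x y : S × A) :
    GXi S A ξ' (x, y) * (Real.log (GXi S A ξ' (x, y) / muXi S A ξ' x) -
        Real.log (GXi S A ξ (x, y) / muXi S A ξ x)) =
      GXi S A ξ' (x, y) * (policyLogRatio ξ' ξ y + kernelLogRatio ξ' ξ (x.1, x.2, y.1)) := by
  rcases eq_or_ne (GXi S A ξ' (x, y)) 0 with h | h
  · rw [h, zero_mul, zero_mul]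
  · have hξ'xy : ξ' (x.1, x.2, y.1) ≠ 0 := mt GXi_eq_zero_of_eq_zero h
    rw [log_div_sub_log_div_eq (GXi_eq_muXi_mul hξ' x y) (GXi_eq_muXi_mul hξ.1.1 x y) h
      (muXi_pos hξ x).ne' (piXi_pos hξ _ _).ne' (QXi_ne_zero hξ (hsupp _ hξ'xy))]
    rfl

theorem mul_log_div_sub_log_div (hξ' : ∀ z, 0 ≤ ξ' z) (hξ : ξ ∈ Xi0Set S A)
    (hsupp : ∀ z, ξ' z ≠ 0 → ξ z ≠ 0) (z : S × A × S) :
    ξ' z * (Real.log (ξ' z / rowXi S A ξ' z.1) - Real.log (ξ z / rowXi S A ξ z.1)) =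
      ξ' z * (policyLogRatio ξ' ξ (z.1, z.2.1) + kernelLogRatio ξ' ξ z) := by
  rcases eq_or_ne (ξ' z) 0 with h | h
  · rw [h, zero_mul, zero_mul]
  · rw [log_div_sub_log_div_eq (eq_rowXi_mul_piXi_mul_QXi hξ' z)
      (eq_rowXi_mul_piXi_mul_QXi hξ.1.1 z) h (rowXi_pos hξ _).ne' (piXi_pos hξ _ _).ne'
      (QXi_ne_zero hξ (hsupp z h))]
    rfl

theorem sum_GXi_mul_log_div_eq (hξ' : ξ' ∈ XiSet S A) (hξ : ξ ∈ Xi0Set S A)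
    (hsupp : ∀ z, ξ' z ≠ 0 → ξ z ≠ 0) :
    ∑ z, GXi S A ξ' z * (Real.log (GXi S A ξ' z / muXi S A ξ' z.1) -
        Real.log (GXi S A ξ z / muXi S A ξ z.1)) =
      ∑ z, ξ' z * (Real.log (ξ' z / rowXi S A ξ' z.1) - Real.log (ξ z / rowXi S A ξ z.1)) :=
  calc _ = ∑ z : (S × A) × (S × A), GXi S A ξ' z *
          (policyLogRatio ξ' ξ z.2 + kernelLogRatio ξ' ξ (z.1.1, z.1.2, z.2.1)) :=
        Finset.sum_congr rfl fun z _ => GXi_mul_log_div_sub_log_div hξ'.1 hξ hsupp z.1 z.2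
    _ = ∑ y, muXi S A ξ' y * policyLogRatio ξ' ξ y + ∑ z, ξ' z * kernelLogRatio ξ' ξ z := by
        simp only [mul_add, Finset.sum_add_distrib, sum_GXi_mul_snd hξ', sum_GXi_mul_fst hξ']
    _ = ∑ z, ξ' z * (policyLogRatio ξ' ξ (z.1, z.2.1) + kernelLogRatio ξ' ξ z) := by
        simp only [mul_add, Finset.sum_add_distrib, sum_mul_muXi]
    _ = _ := Finset.sum_congr rfl fun z _ => (mul_log_div_sub_log_div hξ'.1 hξ hsupp z).symm

end LogRatio

variable (S A : Type*) [Fintype S] [Fintype A] [DecidableEq S] [DecidableEq A]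

/-- **Relation between `D_mc` and `D_mdp`** (Proposition 2): the map `G` is a
well-defined map from `Ξ` to `Θ`, and `D_mc(G(ξ')‖G(ξ)) = D_mdp(ξ'‖ξ)` for all
`ξ' ∈ Ξ` and `ξ ∈ Ξ₀`. -/
theorem Dmc_GXi_eq_Dmdp :
    (∀ ξ ∈ XiSet S A, GXi S A ξ ∈ ThetaSet S A) ∧
    (∀ ξ' ∈ XiSet S A, ∀ ξ ∈ Xi0Set S A,
      Dmc S A (GXi S A ξ') (GXi S A ξ) = Dmdp S A ξ' ξ) := by
  refine ⟨fun ξ hξ => GXi_mem_ThetaSet hξ, fun ξ' hξ' ξ hξ => ?_⟩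
  simp only [Dmc, Dmdp, sum_GXi_row hξ', sum_GXi_row hξ.1]
  by_cases hsupp : ∀ z, ξ' z ≠ 0 → ξ z ≠ 0
  · have hsuppG : ∀ z, GXi S A ξ' z ≠ 0 → GXi S A ξ z ≠ 0 := fun z h =>
      GXi_ne_zero hξ (hsupp _ (mt GXi_eq_zero_of_eq_zero h))
    rw [sum_ite_zero_top_eq_coe _ _ _ hsuppG, sum_ite_zero_top_eq_coe _ _ _ hsupp,
      sum_GXi_mul_log_div_eq hξ' hξ hsupp]
  · push Not at hsupp
    obtain ⟨⟨s, a, s'⟩, hξ'z, hξz⟩ := hsupp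
    obtain ⟨a', -, hG'⟩ := Finset.exists_ne_zero_of_sum_ne_zero
      ((sum_GXi_fiber hξ' (s, a) s').trans_ne hξ'z)
    rw [sum_ite_zero_top_eq_top _ _ _ hG' (GXi_eq_zero_of_eq_zero (y := (s', a')) hξz),
      sum_ite_zero_top_eq_top _ _ _ hξ'z hξz]

end OfflineRL
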